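/- arXiv:2111.12801 — 2 statements merged into one kernel-verified Lean document; each statement's English description precedes it below -/
import Mathlib

section
/- Let X be a finite closure space and let x ∈ X be an essential point (x ∉ c(∅)). Then the following are equivalent: (1) x is regular, i.e. 𝓜(x) has exactly one element; (2) 𝒰(x) is closed under binary intersections, i.e. U, V ∈ 𝒰(x) implies U ∩ V ∈ 𝒰(x); (3) for all A, B ⊆ X, if A → x and B → x then A ∪ B → x. -/
/-- The set of neighborhoods of a point `x` in a closure space with closure operator `c`:
`U` is a neighborhood of `x` if `x ∉ c (X \ U)`. -/
def nbhd {X : Type*} (c : Set X → Set X) (x : X) : Set (Set X) := {U | x ∉ c Uᶜ}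

/-- The set `𝓜(x)` of minimal neighborhoods of `x` (minimal elements of `nbhd c x`
under inclusion). -/
def minNbhd {X : Type*} (c : Set X → Set X) (x : X) : Set (Set X) :=
  {M | M ∈ nbhd c x ∧ ∀ U ∈ nbhd c x, U ⊆ M → U = M}

/-- A subset `U` is open in the closure space if its complement is closed. -/
def isOpenCS {X : Type*} (c : Set X → Set X) (U : Set X) : Prop := c Uᶜ = Uᶜ

/-- `A` converges to `x` if `A` is contained in some minimal neighborhood of `x`. -/
def conv {X : Type*} (c : Set X → Set X) (A : Set X) (x : X) : Prop :=
  ∃ M ∈ minNbhd c x, A ⊆ M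


lemma nbhd_mono {X : Type*} (c : Set X → Set X)
    (hc2 : ∀ A B : Set X, A ⊆ B → c A ⊆ c B) (x : X) {U V : Set X}
    (hU : U ∈ nbhd c x) (hUV : U ⊆ V) : V ∈ nbhd c x :=
  fun h => hU (hc2 _ _ (Set.compl_subset_compl.mpr hUV) h)

lemma exists_min {X : Type*} [Fintype X] (c : Set X → Set X) (x : X)
    {U : Set X} (hU : U ∈ nbhd c x) : ∃ M ∈ minNbhd c x, M ⊆ U := by
  obtain ⟨M, ⟨hM, hMU⟩, hmin⟩ :=
    Set.Finite.exists_minimalFor id {V | V ∈ nbhd c x ∧ V ⊆ U}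
      (Set.toFinite _) ⟨U, hU, subset_rfl⟩
  exact ⟨M, ⟨hM, fun V hV hVM => hVM.antisymm (hmin ⟨hV, hVM.trans hMU⟩ hVM)⟩, hMU⟩

/-- For an essential point `x`, the following are equivalent: `x` is regular;
the neighborhoods of `x` are closed under binary intersection;
convergence to `x` is closed under binary union. -/
theorem stmt_8 {X : Type*} [Fintype X] (c : Set X → Set X)
    (hc1 : ∀ A : Set X, A ⊆ c A)
    (hc2 : ∀ A B : Set X, A ⊆ B → c A ⊆ c B)
    (hc3 : ∀ A : Set X, c (c A) = c A)
    (x : X) (hx : x ∉ c ∅) :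
    ((∃! M : Set X, M ∈ minNbhd c x) ↔
      (∀ U V : Set X, U ∈ nbhd c x → V ∈ nbhd c x → U ∩ V ∈ nbhd c x)) ∧
    ((∃! M : Set X, M ∈ minNbhd c x) ↔
      (∀ A B : Set X, conv c A x → conv c B x → conv c (A ∪ B) x)) := by
  have huniv : Set.univ ∈ nbhd c x := by
    simpa [nbhd] using hx
  have hmin_sub : ∀ {M U : Set X}, M ∈ minNbhd c x → U ∈ nbhd c x → M ⊆ U → M = U → True := fun _ _ _ _ => trivial
  constructor
  · constructor
    · rintro ⟨M, hM, huniq⟩ U V hU hV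
      -- M is contained in every neighborhood
      have key : ∀ W ∈ nbhd c x, M ⊆ W := by
        intro W hW
        obtain ⟨N, hN, hNW⟩ := exists_min c x hW
        rw [huniq N hN] at hNW; exact hNW
      exact nbhd_mono c hc2 x hM.1 (Set.subset_inter (key U hU) (key V hV))
    · intro h
      obtain ⟨M, hM, _⟩ := exists_min c x huniv
      refine ⟨M, hM, fun N hN => ?_⟩
      have hint := h N M hN.1 hM.1
      have h1 : N ∩ M = M := hM.2 _ hint Set.inter_subset_right
      have h2 : N ∩ M = N := hN.2 _ hint Set.inter_subset_left
      rw [← h1, h2]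
  · constructor
    · rintro ⟨M, hM, huniq⟩ A B ⟨MA, hMA, hA⟩ ⟨MB, hMB, hB⟩
      rw [huniq MA hMA] at hA; rw [huniq MB hMB] at hB
      exact ⟨M, hM, Set.union_subset hA hB⟩
    · intro h
      obtain ⟨M, hM, _⟩ := exists_min c x huniv
      refine ⟨M, hM, fun N hN => ?_⟩
      obtain ⟨P, hP, hNP⟩ := h N M ⟨N, hN, subset_rfl⟩ ⟨M, hM, subset_rfl⟩
      have h1 : N = P := hP.2 _ hN.1 ((Set.subset_union_left).trans hNP)
      have h2 : M = P := hP.2 _ hM.1 ((Set.subset_union_right).trans hNP)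
      rw [h1, h2]
end

section
/- Let f : X → Y be a regular map between finite closure spaces. Then there exists a unique map F : Top X → Top Y that is monotone with respect to the quasiorders on Top X and Top Y (equivalently, continuous for the associated finite topologies) and makes the square commute: π_Y ∘ F = f ∘ π_X. Explicitly, F(x, M) = (f(x), K), where K is the unique element of 𝓜(f(x)) with { U ∈ 𝒰(f(x)) | f(M) ⊆ U } = { B ⊆ Y | K ⊆ B }. -/
lemma mem_of_nbhd {X : Type*} {c : Set X → Set X} (h1 : ∀ A : Set X, A ⊆ c A)
    {x : X} {U : Set X} (hU : U ∈ nbhd c x) : x ∈ U := by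
  by_contra h
  exact hU (h1 Uᶜ h)

lemma minNbhd_open {X : Type*} {c : Set X → Set X} (h1 : ∀ A : Set X, A ⊆ c A)
    (h3 : ∀ A : Set X, c (c A) = c A)
    {x : X} {M : Set X} (hM : M ∈ minNbhd c x) : c Mᶜ = Mᶜ := by
  have hsub : (c Mᶜ)ᶜ ⊆ M := by
    rw [Set.compl_subset_comm]; exact h1 Mᶜ
  have hn : (c Mᶜ)ᶜ ∈ nbhd c x := by
    show x ∉ c ((c Mᶜ)ᶜ)ᶜ
    rw [compl_compl, h3]
    exact hM.1
  have h' : Mᶜ = c Mᶜ := by rw [← hM.2 _ hn hsub, compl_compl]; exact (h3 _).symm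
  rw [h', h3]

lemma exists_min_sub {X : Type*} [Fintype X] {c : Set X → Set X}
    {x : X} {U : Set X} (hU : U ∈ nbhd c x) : ∃ M ∈ minNbhd c x, M ⊆ U := by
  have hfin : ({V | V ∈ nbhd c x ∧ V ⊆ U} : Set (Set X)).Finite := Set.toFinite _
  obtain ⟨M, hM, hmin⟩ := hfin.exists_minimalFor id _ ⟨U, hU, subset_rfl⟩
  refine ⟨M, ⟨hM.1, fun V hV hVM => ?_⟩, hM.2⟩
  exact hVM.antisymm (hmin ⟨hV, hVM.trans hM.2⟩ hVM)

/-- If `f` is regular, there is a unique monotone (i.e. continuous) map `F : Top X → Top Y`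
between the topological resolutions commuting with the natural projections; it is given
explicitly by `F (x, M) = (f x, K)` where `K ∈ 𝓜(f x)` satisfies
`{U ∈ 𝒰(f x) | f '' M ⊆ U} = {B | K ⊆ B}`. Here `Top X` is the subtype of pairs `(x, M)`
with `M ∈ 𝓜(x)`, quasiordered by `(x, M) ≤ (y, N) ↔ N ⊆ M`. -/
theorem stmt_19 {X Y : Type*} [Fintype X] [Fintype Y]
    (cX : Set X → Set X) (cY : Set Y → Set Y)
    (hX1 : ∀ A : Set X, A ⊆ cX A)
    (hX2 : ∀ A B : Set X, A ⊆ B → cX A ⊆ cX B)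
    (hX3 : ∀ A : Set X, cX (cX A) = cX A)
    (hY1 : ∀ A : Set Y, A ⊆ cY A)
    (hY2 : ∀ A B : Set Y, A ⊆ B → cY A ⊆ cY B)
    (hY3 : ∀ A : Set Y, cY (cY A) = cY A)
    (f : X → Y)
    (hreg : ∀ x : X, ∀ M ∈ minNbhd cX x, ∃ K ∈ minNbhd cY (f x),
      {U : Set Y | U ∈ nbhd cY (f x) ∧ f '' M ⊆ U} = {B : Set Y | K ⊆ B}) :
    ∃ F : {p : X × Set X // p.2 ∈ minNbhd cX p.1} →
          {q : Y × Set Y // q.2 ∈ minNbhd cY q.1},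
      ((∀ p q : {p : X × Set X // p.2 ∈ minNbhd cX p.1},
          q.val.2 ⊆ p.val.2 → (F q).val.2 ⊆ (F p).val.2) ∧
        (∀ p : {p : X × Set X // p.2 ∈ minNbhd cX p.1}, (F p).val.1 = f p.val.1) ∧
        (∀ p : {p : X × Set X // p.2 ∈ minNbhd cX p.1},
          {U : Set Y | U ∈ nbhd cY (f p.val.1) ∧ f '' p.val.2 ⊆ U} =
            {B : Set Y | (F p).val.2 ⊆ B})) ∧
      ∀ G : {p : X × Set X // p.2 ∈ minNbhd cX p.1} →
            {q : Y × Set Y // q.2 ∈ minNbhd cY q.1},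
        (∀ p q : {p : X × Set X // p.2 ∈ minNbhd cX p.1},
          q.val.2 ⊆ p.val.2 → (G q).val.2 ⊆ (G p).val.2) →
        (∀ p : {p : X × Set X // p.2 ∈ minNbhd cX p.1}, (G p).val.1 = f p.val.1) →
        G = F := by
  choose K hK1 hK2 using fun (p : {p : X × Set X // p.2 ∈ minNbhd cX p.1}) =>
    hreg p.val.1 p.val.2 p.2
  -- K p is itself a neighborhood of f p.1 containing f '' p.2
  have hKmem : ∀ p, K p ∈ nbhd cY (f p.val.1) ∧ f '' p.val.2 ⊆ K p := fun p => by
    have : K p ∈ {B : Set Y | K p ⊆ B} := fun _ h => h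
    rw [← hK2 p] at this
    exact this
  refine ⟨fun p => ⟨(f p.val.1, K p), hK1 p⟩, ⟨?_, fun p => rfl, fun p => hK2 p⟩, ?_⟩
  · -- monotonicity
    intro p q hqp
    show K q ⊆ K p
    have : K p ∈ {U : Set Y | U ∈ nbhd cY (f q.val.1) ∧ f '' q.val.2 ⊆ U} := by
      constructor
      · -- K p is open and contains f q.1
        have hop := minNbhd_open hY1 hY3 (hK1 p)
        have hyq : f q.val.1 ∈ K p :=
          (hKmem p).2 ⟨q.val.1, hqp (mem_of_nbhd hX1 q.2.1), rfl⟩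
        show f q.val.1 ∉ cY (K p)ᶜ
        rw [hop]
        simpa using hyq
      · exact (Set.image_mono hqp).trans (hKmem p).2
    rw [hK2 q] at this
    exact this
  · -- uniqueness
    intro G hG1 hG2
    funext p
    apply Subtype.ext
    apply Prod.ext (hG2 p)
    show (G p).val.2 = K p
    have hKsub : K p ⊆ (G p).val.2 := by
      have : (G p).val.2 ∈
          {U : Set Y | U ∈ nbhd cY (f p.val.1) ∧ f '' p.val.2 ⊆ U} := by
        constructor
        · have := (G p).2.1
          rwa [hG2 p] at this
        · rintro _ ⟨y, hy, rfl⟩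
          have hop := minNbhd_open hX1 hX3 p.2
          have hnb : p.val.2 ∈ nbhd cX y := by
            show y ∉ cX p.val.2ᶜ
            rw [hop]; simpa using hy
          obtain ⟨N, hN, hNsub⟩ := exists_min_sub hnb
          set q : {p : X × Set X // p.2 ∈ minNbhd cX p.1} := ⟨(y, N), hN⟩
          have hfy : f y ∈ (G q).val.2 := by
            have := mem_of_nbhd hY1 (G q).2.1
            rwa [hG2 q] at this
          exact hG1 p q hNsub hfy
      rw [hK2 p] at this
      exact this
    have hKnb : K p ∈ nbhd cY ((G p).val.1) := by
      rw [hG2 p]; exact (hKmem p).1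
    exact ((G p).2.2 (K p) hKnb hKsub).symm
end
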